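/- arXiv:1709.03498 — 6 statements merged into one kernel-verified Lean document; each statement's English description precedes it below -/
import Mathlib

section
/- For every real parameter a with a > 2, the dimensionless energy-to-pressure ratio r(γ, a) tends to a + 1 as γ → 0⁺; that is, lim_{γ→0⁺} (∫_γ^∞ (K₃(s) − K₂(s)/s)(s − γ)^a ds) / (∫_γ^∞ (K₂(s)/s)(s − γ)^a ds) = a + 1. -/
/-!
As `γ → 0⁺`, dominated convergence (with `0 ≤ (s - γ) ^ a ≤ s ^ a`) replaces `(s - γ) ^ a` by
`s ^ a` in both integrals. These limits are finite because `K₁, K₂ = O(s⁻²)` at `0` and decay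
exponentially at `∞`, which is where `a > 2` is needed. The recurrence `s K₃ = s K₁ + 4 K₂` turns
the limiting numerator into `∫ s ^ a K₁ + 3 ∫ s ^ (a - 1) K₂`, and integrating
`(s ^ a K₂)' = (a - 2) s ^ (a - 1) K₂ - s ^ a K₁` over `(0, ∞)` gives
`∫ s ^ a K₁ = (a - 2) ∫ s ^ (a - 1) K₂`, so the ratio tends to `(a - 2) + 3 = a + 1`.
The recurrence and the formula for `K₂'` come from differentiating under the integral sign and
integrating by parts in `t`.
-/

open MeasureTheory Real Filter Set

/-- Modified Bessel function of the second kind, integral representation. -/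
noncomputable def besselK (n : ℕ) (x : ℝ) : ℝ :=
  ∫ t in Set.Ioi (0 : ℝ), Real.exp (-x * Real.cosh t) * Real.cosh (n * t)

/-- Dimensionless energy-to-pressure ratio `r(γ, a) = e/p` of a relativistic
gas with internal structure, state-density measure `φ(I) = I^a`. -/
noncomputable def rRatio (γ a : ℝ) : ℝ :=
  (∫ s in Set.Ioi γ, (besselK 3 s - besselK 2 s / s) * (s - γ) ^ a) /
  (∫ s in Set.Ioi γ, (besselK 2 s / s) * (s - γ) ^ a)

open Topology

lemma one_add_sq_div_four_le_cosh {t : ℝ} (ht : 0 ≤ t) : 1 + t ^ 2 / 4 ≤ cosh t := by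
  rw [cosh_eq]
  linarith [quadratic_le_exp_of_nonneg ht, add_one_le_exp (-t)]

lemma cosh_le_exp_of_nonneg {t : ℝ} (ht : 0 ≤ t) : cosh t ≤ exp t := by
  rw [cosh_eq]
  linarith [exp_le_exp.2 (show -t ≤ t by linarith)]

lemma cosh_mul_cosh_le_cosh_add {u v : ℝ} (hu : 0 ≤ u) (hv : 0 ≤ v) :
    cosh u * cosh v ≤ cosh (u + v) := by
  rw [cosh_add]
  nlinarith [sinh_nonneg_iff.2 hu, sinh_nonneg_iff.2 hv]

lemma integrable_exp_neg_mul_sq_add_mul {b : ℝ} (hb : 0 < b) (c : ℝ) :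
    Integrable fun t : ℝ => exp (-b * t ^ 2 + c * t) := by
  have hsq : ∀ t : ℝ, -b * t ^ 2 + c * t = -b * (t - c / (2 * b)) ^ 2 + c ^ 2 / (4 * b) := by
    intro t; field_simp; ring
  simp_rw [hsq, exp_add]
  exact ((integrable_exp_neg_mul_sq hb).comp_sub_right _).mul_const _

lemma integrableOn_exp_neg_mul_cosh_add_mul {b : ℝ} (hb : 0 < b) (c : ℝ) :
    IntegrableOn (fun t : ℝ => exp (-b * cosh t + c * t)) (Ioi 0) := by
  refine (integrable_exp_neg_mul_sq_add_mul (div_pos hb four_pos) c).integrableOn.mono'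
    (by fun_prop) ?_
  filter_upwards [ae_restrict_mem measurableSet_Ioi] with t ht
  rw [norm_of_nonneg (exp_pos _).le, exp_le_exp]
  nlinarith [one_add_sq_div_four_le_cosh (le_of_lt ht)]

lemma integrableOn_besselK_integrand (n : ℕ) {x : ℝ} (hx : 0 < x) :
    IntegrableOn (fun t : ℝ => exp (-x * cosh t) * cosh (n * t)) (Ioi 0) := by
  refine (integrableOn_exp_neg_mul_cosh_add_mul hx n).mono' (by fun_prop) ?_
  filter_upwards [ae_restrict_mem measurableSet_Ioi] with t (ht : 0 < t)
  rw [norm_of_nonneg (by positivity), exp_add]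
  gcongr
  exact cosh_le_exp_of_nonneg (by positivity)

lemma setIntegral_Ioi_pos {f : ℝ → ℝ} {a : ℝ} (hf : IntegrableOn f (Ioi a))
    (hpos : ∀ s ∈ Ioi a, 0 < f s) : 0 < ∫ s in Ioi a, f s := by
  rw [setIntegral_pos_iff_support_of_nonneg_ae ?_ hf]
  · rw [inter_eq_right.2 fun s hs => Function.mem_support.2 (hpos s hs).ne']
    simp
  · filter_upwards [ae_restrict_mem measurableSet_Ioi] with s hs using (hpos s hs).le

lemma besselK_pos (n : ℕ) {x : ℝ} (hx : 0 < x) : 0 < besselK n x :=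
  setIntegral_Ioi_pos (integrableOn_besselK_integrand n hx) fun t _ => by positivity

lemma besselK_le_besselK {m n : ℕ} (hmn : m ≤ n) {x : ℝ} (hx : 0 < x) :
    besselK m x ≤ besselK n x := by
  refine setIntegral_mono_on (integrableOn_besselK_integrand m hx)
    (integrableOn_besselK_integrand n hx) measurableSet_Ioi fun t (ht : 0 < t) => ?_
  gcongr
  rw [cosh_le_cosh, abs_of_nonneg (by positivity), abs_of_nonneg (by positivity)]
  gcongr

lemma besselK_le_exp_sub_mul {n : ℕ} {c x : ℝ} (hc : 0 < c) (hcx : c ≤ x) :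
    besselK n x ≤ exp (c - x) * besselK n c := by
  rw [besselK, besselK, ← integral_const_mul]
  refine setIntegral_mono_on (integrableOn_besselK_integrand n (hc.trans_le hcx))
    ((integrableOn_besselK_integrand n hc).const_mul _) measurableSet_Ioi fun t _ => ?_
  rw [← mul_assoc, ← exp_add]
  gcongr
  nlinarith [one_le_cosh t]

lemma hasDerivAt_besselK_integral (n : ℕ) {x : ℝ} (hx : 0 < x) :
    HasDerivAt (besselK n)
      (-∫ t in Ioi (0 : ℝ), cosh t * (exp (-x * cosh t) * cosh (n * t))) x := by
  have key := hasDerivAt_integral_of_dominated_loc_of_deriv_le (μ := volume.restrict (Ioi 0))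
    (F := fun y t => exp (-y * cosh t) * cosh (n * t))
    (F' := fun y t => -(cosh t * (exp (-y * cosh t) * cosh (n * t))))
    (Ioi_mem_nhds (half_lt_self hx)) (Eventually.of_forall fun y => by fun_prop)
    (integrableOn_besselK_integrand n hx) (by fun_prop) ?_
    (integrableOn_besselK_integrand (n + 1) (half_pos hx)) ?_
  · rw [← integral_neg]
    exact key.2
  · filter_upwards [ae_restrict_mem measurableSet_Ioi] with t (ht : 0 < t) y (hy : x / 2 < y)
    have hexp : exp (-y * cosh t) ≤ exp (-(x / 2) * cosh t) := by
      rw [exp_le_exp]; nlinarith [one_le_cosh t]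
    have hcosh : cosh t * cosh (n * t) ≤ cosh (↑(n + 1) * t) := by
      rw [show (↑(n + 1) : ℝ) * t = t + n * t by push_cast; ring]
      exact cosh_mul_cosh_le_cosh_add ht.le (by positivity)
    rw [norm_neg, norm_of_nonneg (by positivity), mul_left_comm]
    exact mul_le_mul hexp hcosh (by positivity) (exp_pos _).le
  · refine Eventually.of_forall fun t y _ => ?_
    refine (((hasDerivAt_neg y).mul_const (cosh t)).exp.mul_const (cosh (n * t))).congr_deriv ?_
    ring

lemma continuousOn_besselK (n : ℕ) : ContinuousOn (besselK n) (Ioi 0) :=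
  fun _ hx => (hasDerivAt_besselK_integral n hx).continuousAt.continuousWithinAt

lemma besselK_add_two (n : ℕ) {x : ℝ} (hx : 0 < x) :
    x * besselK (n + 2) x = x * besselK n x + 2 * (n + 1) * besselK (n + 1) x := by
  set I : ℕ → ℝ → ℝ := fun k t => exp (-x * cosh t) * cosh (k * t) with hI
  have hint : ∀ k, IntegrableOn (I k) (Ioi 0) := fun k => integrableOn_besselK_integrand k hx
  set g : ℝ → ℝ := fun t => exp (-x * cosh t) * sinh (↑(n + 1) * t)
  -- the derivative of `g`, rewritten by `2 sinh t sinh ((n + 1) t) = cosh ((n + 2) t) - cosh (n t)`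
  set g' : ℝ → ℝ := fun t => -(x / 2) * I (n + 2) t + (x / 2) * I n t + (n + 1) * I (n + 1) t
  have hg : ∀ t, HasDerivAt g (g' t) t := by
    intro t
    refine (((hasDerivAt_cosh t).const_mul (-x)).exp.mul
      ((hasDerivAt_id' t).const_mul (↑(n + 1) : ℝ)).sinh).congr_deriv ?_
    simp only [hI, g']
    push_cast
    rw [show ((n : ℝ) + 2) * t = (n + 1) * t + t by ring,
      show (n : ℝ) * t = (n + 1) * t - t by ring, cosh_add, cosh_sub]
    ring
  have hg'int : IntegrableOn g' (Ioi 0) :=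
    (((hint _).const_mul _).add ((hint _).const_mul _)).add ((hint _).const_mul _)
  have hgint : IntegrableOn g (Ioi 0) := by
    refine (hint (n + 1)).mono' (by fun_prop) (Eventually.of_forall fun t => ?_)
    have habs : |sinh (↑(n + 1) * t)| ≤ cosh (↑(n + 1) * t) := by
      rw [abs_sinh, ← cosh_abs (↑(n + 1) * t)]
      exact (sinh_lt_cosh _).le
    rw [norm_mul, norm_of_nonneg (exp_pos _).le, Real.norm_eq_abs]
    exact mul_le_mul_of_nonneg_left habs (exp_pos _).le
  have hFTC := integral_Ioi_of_hasDerivAt_of_tendsto' (fun t _ => hg t) hg'int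
    (tendsto_zero_of_hasDerivAt_of_integrableOn_Ioi (fun t _ => hg t) hg'int hgint)
  have hsplit : ∫ t in Ioi 0, g' t =
      -(x / 2) * besselK (n + 2) x + (x / 2) * besselK n x + (n + 1) * besselK (n + 1) x := by
    rw [integral_add ?_ ((hint _).const_mul _), integral_add ((hint _).const_mul _)
      ((hint _).const_mul _), integral_const_mul, integral_const_mul, integral_const_mul]
    · rfl
    · exact ((hint _).const_mul _).add ((hint _).const_mul _)
  simp only [g, sinh_zero, mul_zero, sub_zero, hsplit] at hFTC
  linarith

lemma hasDerivAt_besselK_succ (n : ℕ) {x : ℝ} (hx : 0 < x) :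
    HasDerivAt (besselK (n + 1)) (-besselK n x - (n + 1) / x * besselK (n + 1) x) x := by
  convert hasDerivAt_besselK_integral (n + 1) hx using 1
  have hprod : ∀ t : ℝ, cosh t * (exp (-x * cosh t) * cosh (↑(n + 1) * t)) =
      (exp (-x * cosh t) * cosh (n * t) + exp (-x * cosh t) * cosh (↑(n + 2) * t)) / 2 := by
    intro t
    push_cast
    rw [show ((n : ℝ) + 2) * t = (n + 1) * t + t by ring,
      show (n : ℝ) * t = (n + 1) * t - t by ring, cosh_add, cosh_sub]
    ring
  simp_rw [hprod, integral_div, integral_add (integrableOn_besselK_integrand n hx)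
    (integrableOn_besselK_integrand (n + 2) hx)]
  rw [← besselK, ← besselK]
  field_simp
  linarith [besselK_add_two n hx]

lemma sq_mul_besselK_two_le {x : ℝ} (hx : 0 < x) : x ^ 2 * besselK 2 x ≤ 2 * x + 4 := by
  -- `eᵗ / 2 ≤ cosh t` bounds the integrand by `G'`, which has the explicit primitive `G`.
  set G : ℝ → ℝ := fun t => -(exp (-(x / 2) * exp t) * (2 / x * exp t + 4 / x ^ 2))
  set G' : ℝ → ℝ := fun t => exp (-(x / 2) * exp t) * exp (2 * t)
  have hG : ∀ t ∈ Ici (0 : ℝ), HasDerivAt G (G' t) t := by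
    intro t _
    refine ((((hasDerivAt_exp t).const_mul _).exp.mul
      (((hasDerivAt_exp t).const_mul _).add_const _)).neg).congr_deriv ?_
    simp only [G', show 2 * t = t + t by ring, exp_add]
    field_simp
    ring
  have hG'nonneg : ∀ t ∈ Ioi (0 : ℝ), 0 ≤ G' t := fun t _ => by positivity
  have hGtop : Tendsto G atTop (𝓝 0) := by
    have hdecay : ∀ s : ℝ, Tendsto (fun u : ℝ => u ^ s * exp (-(x / 2) * u)) atTop (𝓝 0) :=
      fun s => tendsto_rpow_mul_exp_neg_mul_atTop_nhds_zero s _ (half_pos hx)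
    have := (((hdecay 1).const_mul (2 / x)).add ((hdecay 0).const_mul (4 / x ^ 2))).neg.comp
      tendsto_exp_atTop
    simp only [rpow_one, rpow_zero, mul_zero, add_zero, neg_zero] at this
    refine this.congr fun t => ?_
    simp only [G, Function.comp]
    ring
  have hG'int := integrableOn_Ioi_deriv_of_nonneg' hG hG'nonneg hGtop
  have hle : besselK 2 x ≤ ∫ t in Ioi 0, G' t := by
    refine setIntegral_mono_on (integrableOn_besselK_integrand 2 hx) hG'int measurableSet_Ioi
      fun t (ht : 0 < t) => ?_
    have hcosh : exp t / 2 ≤ cosh t := by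
      rw [cosh_eq]; linarith [exp_pos (-t)]
    refine mul_le_mul ?_ ?_ (cosh_pos _).le (exp_pos _).le
    · rw [exp_le_exp]; nlinarith
    · push_cast; exact cosh_le_exp_of_nonneg (by positivity)
  rw [integral_Ioi_of_hasDerivAt_of_nonneg' hG hG'nonneg hGtop] at hle
  have hexp : exp (-(x / 2)) ≤ 1 := exp_le_one_iff.2 (by linarith)
  simp only [G, exp_zero, mul_one] at hle
  calc x ^ 2 * besselK 2 x ≤ x ^ 2 * (exp (-(x / 2)) * (2 / x + 4 / x ^ 2)) := by
        gcongr; linarith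
    _ ≤ x ^ 2 * (2 / x + 4 / x ^ 2) := by gcongr; exact mul_le_of_le_one_left (by positivity) hexp
    _ = 2 * x + 4 := by field_simp

lemma rpow_mul_besselK_two_le {p s : ℝ} (hs : 0 < s) (hs1 : s ≤ 1) :
    s ^ p * besselK 2 s ≤ 6 * s ^ (p - 2) := by
  have hsplit : s ^ p = s ^ (p - 2) * s ^ 2 := by
    rw [← rpow_natCast, ← rpow_add hs]; norm_num
  rw [hsplit, mul_assoc, mul_comm 6]
  gcongr
  linarith [sq_mul_besselK_two_le hs]

lemma rpow_mul_besselK_le_rpow_mul_exp_neg (n : ℕ) {p s : ℝ} (hs : 1 ≤ s) :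
    s ^ p * besselK n s ≤ exp 1 * besselK n 1 * (s ^ p * exp (-s)) := by
  have hK := besselK_le_exp_sub_mul (n := n) zero_lt_one hs
  rw [sub_eq_add_neg, exp_add] at hK
  calc s ^ p * besselK n s ≤ s ^ p * (exp 1 * exp (-s) * besselK n 1) := by gcongr
    _ = _ := by ring

lemma integrableOn_rpow_mul_besselK {n : ℕ} (hn : n ≤ 2) {p : ℝ} (hp : 1 < p) :
    IntegrableOn (fun s => s ^ p * besselK n s) (Ioi 0) := by
  have hcont : ContinuousOn (fun s => s ^ p * besselK n s) (Ioi 0) :=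
    (continuousOn_id.rpow_const fun s hs => Or.inl (ne_of_gt hs)).mul (continuousOn_besselK n)
  rw [← Ioo_union_Ici_eq_Ioi zero_lt_one, integrableOn_union]
  constructor
  · have hrpow := (intervalIntegral.integrableOn_Ioo_rpow_iff zero_lt_one).2
      (by linarith : -1 < p - 2)
    refine (hrpow.const_mul 6).mono'
      ((hcont.mono Ioo_subset_Ioi_self).aestronglyMeasurable measurableSet_Ioo) ?_
    filter_upwards [ae_restrict_mem measurableSet_Ioo] with s ⟨hs0, hs1⟩
    rw [norm_of_nonneg (mul_nonneg (rpow_nonneg hs0.le _) (besselK_pos n hs0).le)]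
    calc s ^ p * besselK n s ≤ s ^ p * besselK 2 s := by gcongr; exact besselK_le_besselK hn hs0
      _ ≤ 6 * s ^ (p - 2) := rpow_mul_besselK_two_le hs0 hs1.le
  · have hGamma := GammaIntegral_convergent (s := p + 1) (by linarith)
    simp only [add_sub_cancel_right] at hGamma
    refine (((hGamma.mono_set (Ici_subset_Ioi.2 zero_lt_one)).const_mul
      (exp 1 * besselK n 1))).mono'
      ((hcont.mono (Ici_subset_Ioi.2 zero_lt_one)).aestronglyMeasurable measurableSet_Ici) ?_
    filter_upwards [ae_restrict_mem measurableSet_Ici] with s (hs : 1 ≤ s)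
    rw [norm_of_nonneg (mul_nonneg (rpow_nonneg (by linarith) _) (besselK_pos n (by linarith)).le),
      mul_comm (exp (-s))]
    exact rpow_mul_besselK_le_rpow_mul_exp_neg n hs

lemma tendsto_rpow_mul_besselK_two_nhdsGT_zero {p : ℝ} (hp : 2 < p) :
    Tendsto (fun s => s ^ p * besselK 2 s) (𝓝[>] 0) (𝓝 0) := by
  have hbound : Tendsto (fun s : ℝ => 6 * s ^ (p - 2)) (𝓝[>] 0) (𝓝 0) := by
    have := ((continuousAt_rpow_const 0 (p - 2) (Or.inr (by linarith))).tendsto.const_mul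
      6).mono_left (nhdsWithin_le_nhds (s := Ioi 0))
    rwa [zero_rpow (by linarith), mul_zero] at this
  refine squeeze_zero' ?_ ?_ hbound
  · filter_upwards [self_mem_nhdsWithin] with s (hs : 0 < s)
    exact mul_nonneg (rpow_nonneg hs.le _) (besselK_pos 2 hs).le
  · filter_upwards [Ioo_mem_nhdsGT zero_lt_one] with s ⟨hs0, hs1⟩
    exact rpow_mul_besselK_two_le hs0 hs1.le

lemma tendsto_rpow_mul_besselK_atTop (n : ℕ) (p : ℝ) :
    Tendsto (fun s => s ^ p * besselK n s) atTop (𝓝 0) := by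
  have hbound := (tendsto_rpow_mul_exp_neg_mul_atTop_nhds_zero p 1 one_pos).const_mul
    (exp 1 * besselK n 1)
  simp only [neg_mul, one_mul, mul_zero] at hbound
  refine squeeze_zero' ?_ ?_ hbound
  · filter_upwards [eventually_gt_atTop 0] with s hs
    exact mul_nonneg (rpow_nonneg hs.le _) (besselK_pos n hs).le
  · filter_upwards [eventually_ge_atTop 1] with s hs
    exact rpow_mul_besselK_le_rpow_mul_exp_neg n hs

lemma hasDerivAt_rpow_mul_besselK_two (p : ℝ) {s : ℝ} (hs : 0 < s) :
    HasDerivAt (fun s => s ^ p * besselK 2 s)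
      ((p - 2) * (s ^ (p - 1) * besselK 2 s) - s ^ p * besselK 1 s) s := by
  refine ((hasDerivAt_rpow_const (Or.inl hs.ne')).mul (hasDerivAt_besselK_succ 1 hs)).congr_deriv ?_
  have hsp : s ^ p = s ^ (p - 1) * s := by
    rw [← rpow_add_one hs.ne']; norm_num
  rw [hsp]
  field_simp
  push_cast
  ring

lemma integral_rpow_mul_besselK_one {p : ℝ} (hp : 2 < p) :
    ∫ s in Ioi 0, s ^ p * besselK 1 s = (p - 2) * ∫ s in Ioi 0, s ^ (p - 1) * besselK 2 s := by
  have hK2 := integrableOn_rpow_mul_besselK le_rfl (by linarith : 1 < p - 1)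
  have hK1 := integrableOn_rpow_mul_besselK one_le_two (by linarith : 1 < p)
  have hcont : ContinuousWithinAt (fun s => s ^ p * besselK 2 s) (Ici 0) 0 := by
    rw [← continuousWithinAt_Ioi_iff_Ici, ContinuousWithinAt, zero_rpow (by linarith), zero_mul]
    exact tendsto_rpow_mul_besselK_two_nhdsGT_zero hp
  have hFTC := integral_Ioi_of_hasDerivAt_of_tendsto hcont
    (fun s hs => hasDerivAt_rpow_mul_besselK_two p hs) ((hK2.const_mul _).sub hK1)
    (tendsto_rpow_mul_besselK_atTop 2 p)
  rw [integral_sub (hK2.const_mul _) hK1, integral_const_mul, zero_rpow (by linarith)] at hFTC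
  linarith

lemma tendsto_setIntegral_Ioi_mul_sub_rpow {f : ℝ → ℝ} {a : ℝ} (ha : 0 ≤ a)
    (hf : IntegrableOn (fun s => f s * s ^ a) (Ioi 0)) :
    Tendsto (fun γ => ∫ s in Ioi γ, f s * (s - γ) ^ a) (𝓝[>] 0)
      (𝓝 (∫ s in Ioi 0, f s * s ^ a)) := by
  -- `f s * (s - γ) ^ a` is `f s * s ^ a` damped by a weight in `[0, 1]` tending to `1`.
  set w : ℝ → ℝ → ℝ := fun γ => (Ioi γ).indicator fun s => ((s - γ) / s) ^ a with hw
  have hw_le : ∀ γ s, 0 < γ → 0 < s → ‖w γ s‖ ≤ 1 := by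
    intro γ s hγ hs
    simp only [hw]
    by_cases hγs : s ∈ Ioi γ
    · have hγs' : γ < s := hγs
      rw [indicator_of_mem hγs, norm_of_nonneg (rpow_nonneg (by bound) _)]
      exact rpow_le_one (by bound) ((div_le_one hs).2 (by linarith)) ha
    · rw [indicator_of_notMem hγs, norm_zero]; exact zero_le_one
  have hweight : ∀ γ, 0 < γ → ∫ s in Ioi γ, f s * (s - γ) ^ a =
      ∫ s in Ioi 0, f s * s ^ a * w γ s := by
    intro γ hγ
    have hpt : ∀ s ∈ Ioi (0 : ℝ), f s * s ^ a * w γ s =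
        (Ioi γ).indicator (fun s => f s * (s - γ) ^ a) s := by
      intro s (hs : 0 < s)
      simp only [hw]
      by_cases hγs : s ∈ Ioi γ
      · rw [indicator_of_mem hγs, indicator_of_mem hγs, div_rpow (sub_pos.2 hγs).le hs.le]
        field_simp [(rpow_pos_of_pos hs a).ne']
      · rw [indicator_of_notMem hγs, indicator_of_notMem hγs, mul_zero]
    rw [setIntegral_congr_fun measurableSet_Ioi hpt, setIntegral_indicator measurableSet_Ioi,
      inter_eq_right.2 (Ioi_subset_Ioi hγ.le)]
  have hlim : Tendsto (fun γ => ∫ s in Ioi 0, f s * s ^ a * w γ s) (𝓝[>] 0)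
      (𝓝 (∫ s in Ioi 0, f s * s ^ a)) := by
    refine tendsto_integral_filter_of_dominated_convergence (fun s => ‖f s * s ^ a‖)
      (Eventually.of_forall fun γ => hf.aestronglyMeasurable.mul
        ((Measurable.indicator (by fun_prop) measurableSet_Ioi).aestronglyMeasurable))
      (eventually_nhdsWithin_of_forall fun γ (hγ : 0 < γ) => ?_) hf.norm ?_
    · filter_upwards [ae_restrict_mem measurableSet_Ioi] with s (hs : 0 < s)
      rw [norm_mul]
      exact mul_le_of_le_one_right (norm_nonneg _) (hw_le γ s hγ hs)
    · filter_upwards [ae_restrict_mem measurableSet_Ioi] with s (hs : 0 < s)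
      have hcont : ContinuousAt (fun γ => f s * s ^ a * ((s - γ) / s) ^ a) 0 := by
        fun_prop (disch := simp [hs.ne'])
      have := hcont.tendsto.mono_left (nhdsWithin_le_nhds (s := Ioi 0))
      rw [sub_zero, div_self hs.ne', one_rpow, mul_one] at this
      refine this.congr' ?_
      filter_upwards [Ioo_mem_nhdsGT hs] with γ hγ
      simp only [hw]
      rw [indicator_of_mem (mem_Ioi.2 hγ.2)]
  exact hlim.congr' (eventually_nhdsWithin_of_forall fun γ hγ => (hweight γ hγ).symm)

lemma besselK_two_div_mul_rpow {s : ℝ} (hs : 0 < s) (a : ℝ) :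
    besselK 2 s / s * s ^ a = s ^ (a - 1) * besselK 2 s := by
  rw [rpow_sub_one hs.ne']
  ring

lemma besselK_three_sub_div_mul_rpow {s : ℝ} (hs : 0 < s) (a : ℝ) :
    (besselK 3 s - besselK 2 s / s) * s ^ a =
      s ^ a * besselK 1 s + 3 * (s ^ (a - 1) * besselK 2 s) := by
  have hK3 : besselK 3 s = besselK 1 s + 4 * (besselK 2 s / s) := by
    have hrec := besselK_add_two 1 hs
    push_cast at hrec
    field_simp
    linarith
  rw [← besselK_two_div_mul_rpow hs a, hK3]
  ring

lemma integrableOn_besselK_two_div_mul_rpow {a : ℝ} (ha : 2 < a) :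
    IntegrableOn (fun s => besselK 2 s / s * s ^ a) (Ioi 0) :=
  (integrableOn_rpow_mul_besselK le_rfl (by linarith : 1 < a - 1)).congr_fun
    (fun s hs => (besselK_two_div_mul_rpow hs a).symm) measurableSet_Ioi

lemma integrableOn_besselK_three_sub_div_mul_rpow {a : ℝ} (ha : 2 < a) :
    IntegrableOn (fun s => (besselK 3 s - besselK 2 s / s) * s ^ a) (Ioi 0) :=
  ((integrableOn_rpow_mul_besselK one_le_two (by linarith : 1 < a)).add
    ((integrableOn_rpow_mul_besselK le_rfl (by linarith : 1 < a - 1)).const_mul 3)).congr_fun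
    (fun s hs => (besselK_three_sub_div_mul_rpow hs a).symm) measurableSet_Ioi

lemma integral_besselK_three_sub_div_mul_rpow {a : ℝ} (ha : 2 < a) :
    ∫ s in Ioi 0, (besselK 3 s - besselK 2 s / s) * s ^ a =
      (a + 1) * ∫ s in Ioi 0, besselK 2 s / s * s ^ a := by
  rw [setIntegral_congr_fun measurableSet_Ioi fun s hs => besselK_three_sub_div_mul_rpow hs a,
    setIntegral_congr_fun measurableSet_Ioi fun s hs => besselK_two_div_mul_rpow hs a,
    integral_add (integrableOn_rpow_mul_besselK one_le_two (by linarith))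
      ((integrableOn_rpow_mul_besselK le_rfl (by linarith)).const_mul 3),
    integral_const_mul, integral_rpow_mul_besselK_one ha]
  ring

/-- For `a > 2`, the energy-to-pressure ratio tends to `a + 1` in the
ultrarelativistic limit `γ → 0⁺`. -/
theorem ultrarelativistic_limit_ratio_large_a (a : ℝ) (ha : 2 < a) :
    Filter.Tendsto (fun γ : ℝ => rRatio γ a) (nhdsWithin 0 (Set.Ioi 0)) (nhds (a + 1)) := by
  have hD := integrableOn_besselK_two_div_mul_rpow ha
  have hD_pos : 0 < ∫ s in Ioi 0, besselK 2 s / s * s ^ a :=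
    setIntegral_Ioi_pos hD fun s (hs : 0 < s) => by have := besselK_pos 2 hs; positivity
  have h := (tendsto_setIntegral_Ioi_mul_sub_rpow (by linarith)
    (integrableOn_besselK_three_sub_div_mul_rpow ha)).div
    (tendsto_setIntegral_Ioi_mul_sub_rpow (by linarith) hD) hD_pos.ne'
  rwa [integral_besselK_three_sub_div_mul_rpow ha, mul_div_cancel_right₀ _ hD_pos.ne'] at h
end

section
/- The Synge energy of a relativistic monatomic gas satisfies the ultrarelativistic limit e/p → 3: namely, lim_{γ→0⁺} (γ · K₃(γ)/K₂(γ) − 1) = 3. -/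
/-!
The substitution `v = x sinh t` (momentum `v`, energy `√(x² + v²)`) gives the momentum
representations
`x³ K₃(x) = ∫₀^∞ e^{-√(x²+v²)} (4v² + x²) dv` and
`x² K₂(x) = ∫₀^∞ e^{-√(x²+v²)} (2v² + x²) / √(x²+v²) dv`.
For `0 < x < 1` both integrands are dominated by multiples of `e^{-v} (vⁿ + 1)`, so as `x → 0⁺`
they converge to the Gamma integrals `∫ 4v² e^{-v} = 8` and `∫ 2v e^{-v} = 2`, and
`γ K₃(γ) / K₂(γ) = γ³ K₃(γ) / (γ² K₂(γ)) → 8 / 2 = 4`.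
-/

open MeasureTheory Real Filter Set

open scoped Topology Nat

lemma integral_Ioi_eq_integral_Ioi_mul_sinh {x : ℝ} (hx : 0 < x) (g : ℝ → ℝ) :
    ∫ v in Ioi 0, g v = ∫ t in Ioi 0, x * cosh t * g (x * sinh t) := by
  let e : ℝ ≃o ℝ := sinhOrderIso.trans (OrderIso.mulLeft₀ x hx)
  have he : ⇑e '' Ioi 0 = Ioi 0 := by rw [e.image_Ioi]; simp [e]
  have h_subst := integral_image_eq_integral_abs_deriv_smul (f := e) (measurableSet_Ioi (a := 0))
    (fun t _ => ((hasDerivAt_sinh t).const_mul x).hasDerivWithinAt) e.injective.injOn g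
  rw [he] at h_subst
  rw [h_subst]
  refine setIntegral_congr_fun measurableSet_Ioi fun t _ => ?_
  simp [e, abs_of_pos (mul_pos hx (cosh_pos t))]

lemma sqrt_sq_add_mul_sinh_sq {x : ℝ} (hx : 0 ≤ x) (t : ℝ) :
    √(x ^ 2 + (x * sinh t) ^ 2) = x * cosh t := by
  rw [sqrt_eq_iff_eq_sq (by positivity) (by positivity [cosh_pos t]), mul_pow, mul_pow, cosh_sq]
  ring

lemma integral_exp_neg_mul_cosh_eq {x : ℝ} (hx : 0 < x) (g : ℝ → ℝ → ℝ) :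
    ∫ t in Ioi 0, exp (-x * cosh t) * g (x * cosh t) (x * sinh t)
      = ∫ v in Ioi 0, exp (-√(x ^ 2 + v ^ 2)) * g √(x ^ 2 + v ^ 2) v / √(x ^ 2 + v ^ 2) := by
  rw [eq_comm, integral_Ioi_eq_integral_Ioi_mul_sinh hx]
  refine setIntegral_congr_fun measurableSet_Ioi fun t _ => ?_
  have hE : x * cosh t ≠ 0 := (mul_pos hx (cosh_pos t)).ne'
  rw [sqrt_sq_add_mul_sinh_sq hx.le, neg_mul]
  field_simp

lemma pow_three_mul_besselK_three {x : ℝ} (hx : 0 < x) :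
    x ^ 3 * besselK 3 x = ∫ v in Ioi 0, exp (-√(x ^ 2 + v ^ 2)) * (4 * v ^ 2 + x ^ 2) := by
  calc x ^ 3 * besselK 3 x
      = ∫ t in Ioi 0, exp (-x * cosh t) * (x * cosh t * (4 * (x * sinh t) ^ 2 + x ^ 2)) := by
        rw [besselK, ← integral_const_mul]
        refine setIntegral_congr_fun measurableSet_Ioi fun t _ => ?_
        push_cast
        rw [cosh_three_mul]
        linear_combination 4 * x ^ 3 * cosh t * exp (-x * cosh t) * cosh_sq t
    _ = ∫ v in Ioi 0, exp (-√(x ^ 2 + v ^ 2)) * (√(x ^ 2 + v ^ 2) * (4 * v ^ 2 + x ^ 2))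
          / √(x ^ 2 + v ^ 2) :=
        integral_exp_neg_mul_cosh_eq hx fun E v => E * (4 * v ^ 2 + x ^ 2)
    _ = _ := by
        refine setIntegral_congr_fun measurableSet_Ioi fun v _ => ?_
        have hE : √(x ^ 2 + v ^ 2) ≠ 0 := by positivity
        field_simp

lemma sq_mul_besselK_two {x : ℝ} (hx : 0 < x) :
    x ^ 2 * besselK 2 x
      = ∫ v in Ioi 0, exp (-√(x ^ 2 + v ^ 2)) * (2 * v ^ 2 + x ^ 2) / √(x ^ 2 + v ^ 2) := by
  rw [← integral_exp_neg_mul_cosh_eq hx fun _ v => 2 * v ^ 2 + x ^ 2, besselK,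
    ← integral_const_mul]
  refine setIntegral_congr_fun measurableSet_Ioi fun t _ => ?_
  push_cast
  rw [cosh_two_mul]
  linear_combination x ^ 2 * exp (-x * cosh t) * cosh_sq t

lemma integrableOn_exp_neg_mul_pow (n : ℕ) :
    IntegrableOn (fun v => exp (-v) * v ^ n) (Ioi 0) := by
  simpa [← rpow_natCast] using GammaIntegral_convergent (s := n + 1) (by positivity)

lemma integral_exp_neg_mul_pow (n : ℕ) : ∫ v in Ioi 0, exp (-v) * v ^ n = (n ! : ℝ) := by
  simpa [← rpow_natCast, Gamma_nat_eq_factorial] using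
    (Gamma_eq_integral (s := n + 1) (by positivity)).symm

lemma tendsto_integral_Ioi_of_le_exp_neg_mul_pow {ι : Type*} {l : Filter ι}
    [l.IsCountablyGenerated] {F : ι → ℝ → ℝ} {f : ℝ → ℝ} (n : ℕ) (C : ℝ)
    (hF_meas : ∀ᶠ i in l, AEStronglyMeasurable (F i) (volume.restrict (Ioi 0)))
    (h_bound : ∀ᶠ i in l, ∀ v > 0, |F i v| ≤ C * (exp (-v) * (v ^ n + 1)))
    (h_lim : ∀ v > 0, Tendsto (fun i => F i v) l (𝓝 (f v))) :
    Tendsto (fun i => ∫ v in Ioi 0, F i v) l (𝓝 (∫ v in Ioi 0, f v)) := by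
  refine tendsto_integral_filter_of_dominated_convergence
    (fun v => C * (exp (-v) * (v ^ n + 1))) hF_meas ?_ ?_ ?_
  · filter_upwards [h_bound] with i hi
    filter_upwards [ae_restrict_mem measurableSet_Ioi] with v hv
    exact hi v hv
  · have h := (integrableOn_exp_neg_mul_pow n).add (integrableOn_exp_neg_mul_pow 0)
    simpa [mul_add] using h.const_mul C
  · filter_upwards [ae_restrict_mem measurableSet_Ioi] with v hv
    exact h_lim v hv

lemma le_sqrt_sq_add_sq (x v : ℝ) : v ≤ √(x ^ 2 + v ^ 2) :=
  le_sqrt_of_sq_le (by nlinarith)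

lemma tendsto_pow_three_mul_besselK_three :
    Tendsto (fun x => x ^ 3 * besselK 3 x) (𝓝[>] 0) (𝓝 8) := by
  have h_lim := tendsto_integral_Ioi_of_le_exp_neg_mul_pow 2 4
    (F := fun x v => exp (-√(x ^ 2 + v ^ 2)) * (4 * v ^ 2 + x ^ 2))
    (f := fun v => 4 * (exp (-v) * v ^ 2)) (l := 𝓝[>] 0)
    (Eventually.of_forall fun x => (by fun_prop : Continuous _).aestronglyMeasurable)
    ?_ ?_
  · rw [integral_const_mul, integral_exp_neg_mul_pow] at h_lim
    norm_num at h_lim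
    refine h_lim.congr' ?_
    filter_upwards [self_mem_nhdsWithin] with x hx
    exact (pow_three_mul_besselK_three hx).symm
  · filter_upwards [Ioo_mem_nhdsGT one_pos] with x ⟨hx0, hx1⟩ v hv
    have h_exp : exp (-√(x ^ 2 + v ^ 2)) ≤ exp (-v) :=
      exp_le_exp.2 (neg_le_neg (le_sqrt_sq_add_sq x v))
    rw [abs_of_nonneg (by positivity)]
    calc exp (-√(x ^ 2 + v ^ 2)) * (4 * v ^ 2 + x ^ 2) ≤ exp (-v) * (4 * (v ^ 2 + 1)) := by
          gcongr; nlinarith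
      _ = _ := by ring
  · intro v hv
    have h_cont : Continuous fun x => exp (-√(x ^ 2 + v ^ 2)) * (4 * v ^ 2 + x ^ 2) := by
      fun_prop
    convert h_cont.continuousWithinAt.tendsto using 2
    rw [zero_pow two_ne_zero, zero_add, add_zero, sqrt_sq hv.le]
    ring

lemma tendsto_sq_mul_besselK_two :
    Tendsto (fun x => x ^ 2 * besselK 2 x) (𝓝[>] 0) (𝓝 2) := by
  have h_lim := tendsto_integral_Ioi_of_le_exp_neg_mul_pow 1 2
    (F := fun x v => exp (-√(x ^ 2 + v ^ 2)) * (2 * v ^ 2 + x ^ 2) / √(x ^ 2 + v ^ 2))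
    (f := fun v => 2 * (exp (-v) * v ^ 1)) (l := 𝓝[>] 0) ?_ ?_ ?_
  · rw [integral_const_mul, integral_exp_neg_mul_pow] at h_lim
    norm_num at h_lim
    refine h_lim.congr' ?_
    filter_upwards [self_mem_nhdsWithin] with x hx
    exact (sq_mul_besselK_two hx).symm
  · filter_upwards [self_mem_nhdsWithin] with x (hx : 0 < x)
    have hE (v : ℝ) : √(x ^ 2 + v ^ 2) ≠ 0 := by positivity
    exact (by fun_prop (disch := exact hE _) : Continuous _).aestronglyMeasurable
  · filter_upwards [Ioo_mem_nhdsGT one_pos] with x ⟨hx0, hx1⟩ v hv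
    have h_exp : exp (-√(x ^ 2 + v ^ 2)) ≤ exp (-v) :=
      exp_le_exp.2 (neg_le_neg (le_sqrt_sq_add_sq x v))
    have hE : 0 < √(x ^ 2 + v ^ 2) := by positivity
    have h_frac : (2 * v ^ 2 + x ^ 2) / √(x ^ 2 + v ^ 2) ≤ 2 * (v + 1) := by
      rw [div_le_iff₀ hE]
      have hvE := le_sqrt_sq_add_sq x v
      have hxE : x ≤ √(x ^ 2 + v ^ 2) := le_sqrt_of_sq_le (by nlinarith)
      nlinarith [mul_le_mul_of_nonneg_left hvE hv.le]
    rw [abs_of_nonneg (by positivity), mul_div_assoc]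
    calc exp (-√(x ^ 2 + v ^ 2)) * ((2 * v ^ 2 + x ^ 2) / √(x ^ 2 + v ^ 2))
        ≤ exp (-v) * (2 * (v + 1)) := by gcongr
      _ = _ := by ring
  · intro v hv
    have h_cont : ContinuousAt
        (fun x => exp (-√(x ^ 2 + v ^ 2)) * (2 * v ^ 2 + x ^ 2) / √(x ^ 2 + v ^ 2)) 0 := by
      refine ContinuousAt.div (by fun_prop) (by fun_prop) ?_
      simp [sqrt_sq hv.le, hv.ne']
    convert h_cont.continuousWithinAt.tendsto using 2
    rw [zero_pow two_ne_zero, zero_add, add_zero, sqrt_sq hv.le]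
    field_simp

/-- Ultrarelativistic limit of the Synge energy of a monatomic gas: `e/p → 3`. -/
theorem ultrarelativistic_limit_synge_monatomic :
    Filter.Tendsto (fun γ : ℝ => γ * besselK 3 γ / besselK 2 γ - 1)
      (nhdsWithin 0 (Set.Ioi 0)) (nhds 3) := by
  have h := (tendsto_pow_three_mul_besselK_three.div tendsto_sq_mul_besselK_two
    two_ne_zero).sub_const 1
  norm_num at h
  refine h.congr' ?_
  filter_upwards [self_mem_nhdsWithin] with γ hγ
  have hγ0 : γ ≠ 0 := ne_of_gt hγ
  rw [pow_succ, mul_assoc, mul_div_mul_left _ _ (pow_ne_zero 2 hγ0)]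
end

section
/- For every real a > 2, the integrals ∫₀^∞ (K₃(s) − K₂(s)/s) s^a ds and ∫₀^∞ (K₂(s)/s) s^a ds are finite and their ratio equals a + 1: (∫₀^∞ (K₃(s) − K₂(s)/s) s^a ds) / (∫₀^∞ (K₂(s)/s) s^a ds) = a + 1. -/
open MeasureTheory Real Filter Set

/-!
Inserting the integral representation of `K_n` and integrating in `s` first (Fubini) turns the
Mellin transform into a Gamma factor times a moment of `sech`:
`∫₀^∞ K_n(s) s^b ds = Γ(b+1) M(n, b+1)`, where
`M(n, b) = coshMoment n b = ∫₀^∞ cosh(n t) cosh(t)^(-b) dt`.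
Since `K₂(s)/s · s^a = K₂(s) s^(a-1)`, numerator and denominator become
`Γ(a+1) M(3, a+1) - Γ(a) M(2, a)` and `Γ(a) M(2, a)`. Differentiating `2 sinh t cosh(t)^(1-a)`,
which vanishes at `0` and at `∞`, gives `a M(3, a+1) = (a+2) M(2, a)`, and with
`Γ(a+1) = a Γ(a)` the ratio is `a + 1`.
-/

open Topology

lemma cosh_le_exp_abs (x : ℝ) : cosh x ≤ exp |x| := by
  rw [← cosh_abs, cosh_eq]
  have : exp (-|x|) ≤ exp |x| := exp_le_exp.2 (by linarith [abs_nonneg x])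
  linarith

lemma exp_le_two_mul_cosh (x : ℝ) : exp x ≤ 2 * cosh x := by
  rw [cosh_eq]
  linarith [exp_pos (-x)]

lemma cosh_rpow_neg_le {b : ℝ} (hb : 0 ≤ b) (t : ℝ) :
    cosh t ^ (-b) ≤ 2 ^ b * exp (-(b * t)) :=
  calc cosh t ^ (-b) ≤ (exp t / 2) ^ (-b) :=
        rpow_le_rpow_of_nonpos (by positivity) (by linarith [exp_le_two_mul_cosh t])
          (by linarith)
    _ = 2 ^ b * exp (-(b * t)) := by
        rw [div_rpow (exp_pos t).le zero_le_two, ← exp_mul, rpow_neg zero_le_two]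
        field_simp

lemma integrableOn_cosh_mul_mul_cosh_rpow_neg {n b : ℝ} (hnb : |n| < b) :
    IntegrableOn (fun t => cosh (n * t) * cosh t ^ (-b)) (Ioi 0) := by
  refine Integrable.mono' ((exp_neg_integrableOn_Ioi 0 (sub_pos.2 hnb)).const_mul (2 ^ b))
    (by fun_prop) ?_
  filter_upwards [ae_restrict_mem measurableSet_Ioi] with t (ht : 0 < t)
  rw [norm_of_nonneg (by positivity)]
  calc cosh (n * t) * cosh t ^ (-b) ≤ exp (|n| * t) * (2 ^ b * exp (-(b * t))) := by
        gcongr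
        · simpa [abs_mul, abs_of_pos ht] using cosh_le_exp_abs (n * t)
        · exact cosh_rpow_neg_le ((abs_nonneg n).trans hnb.le) t
    _ = 2 ^ b * exp (-(b - |n|) * t) := by
        rw [mul_left_comm, ← exp_add]
        ring_nf

lemma integrableOn_rpow_mul_exp_neg_mul {b r : ℝ} (hb : -1 < b) (hr : 0 < r) :
    IntegrableOn (fun s : ℝ => s ^ b * exp (-(r * s))) (Ioi 0) := by
  simpa using integrableOn_rpow_mul_exp_neg_mul_rpow hb one_pos hr

lemma integral_rpow_mul_exp_neg_mul {b r : ℝ} (hb : -1 < b) (hr : 0 < r) :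
    ∫ s in Ioi 0, s ^ b * exp (-(r * s)) = Gamma (b + 1) * r ^ (-(b + 1)) := by
  have := integral_rpow_mul_exp_neg_mul_Ioi (a := b + 1) (by linarith) hr
  rw [add_sub_cancel_right] at this
  rw [this, one_div, inv_rpow hr.le, rpow_neg hr.le, mul_comm]

noncomputable def besselKernel (n : ℕ) (b t s : ℝ) : ℝ :=
  exp (-s * cosh t) * cosh (n * t) * s ^ b

lemma besselKernel_eq (n : ℕ) (b t s : ℝ) :
    besselKernel n b t s = cosh (n * t) * (s ^ b * exp (-(cosh t * s))) := by
  rw [besselKernel, neg_mul, mul_comm s]; ring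

lemma integrableOn_besselKernel (n : ℕ) {b : ℝ} (hb : -1 < b) (t : ℝ) :
    IntegrableOn (besselKernel n b t) (Ioi 0) := by
  exact IntegrableOn.congr_fun ((integrableOn_rpow_mul_exp_neg_mul hb (cosh_pos t)).const_mul _)
    (fun s _ => (besselKernel_eq n b t s).symm) measurableSet_Ioi

lemma integral_besselKernel (n : ℕ) {b : ℝ} (hb : -1 < b) (t : ℝ) :
    ∫ s in Ioi 0, besselKernel n b t s =
      Gamma (b + 1) * (cosh (n * t) * cosh t ^ (-(b + 1))) := by
  simp_rw [besselKernel_eq]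
  rw [integral_const_mul, integral_rpow_mul_exp_neg_mul hb (cosh_pos t)]
  ring

lemma integrable_uncurry_besselKernel (n : ℕ) {b : ℝ} (hnb : (n : ℝ) < b + 1) :
    Integrable (Function.uncurry (besselKernel n b))
      ((volume.restrict (Ioi 0)).prod (volume.restrict (Ioi 0))) := by
  have hb : -1 < b := by linarith [(Nat.cast_nonneg n : (0 : ℝ) ≤ n)]
  have hmeas : Measurable (Function.uncurry (besselKernel n b)) := by
    unfold Function.uncurry besselKernel; fun_prop
  refine (integrable_prod_iff hmeas.aestronglyMeasurable).2
    ⟨.of_forall (integrableOn_besselKernel n hb), ?_⟩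
  have hnorm : ∀ t,
      ∫ s in Ioi 0, ‖besselKernel n b t s‖ = ∫ s in Ioi 0, besselKernel n b t s :=
    fun t => setIntegral_congr_fun measurableSet_Ioi fun s (hs : 0 < s) =>
      norm_of_nonneg (by unfold besselKernel; positivity)
  simp_rw [Function.uncurry_apply_pair, hnorm, integral_besselKernel n hb]
  exact (integrableOn_cosh_mul_mul_cosh_rpow_neg (by simpa using hnb)).const_mul _

noncomputable def coshMoment (n b : ℝ) : ℝ := ∫ t in Ioi 0, cosh (n * t) * cosh t ^ (-b)

lemma besselK_mul_rpow_eq_integral (n : ℕ) (b s : ℝ) :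
    besselK n s * s ^ b = ∫ t in Ioi 0, besselKernel n b t s := by
  rw [besselK, ← integral_mul_const]
  rfl

lemma integrableOn_besselK_mul_rpow (n : ℕ) {b : ℝ} (hnb : (n : ℝ) < b + 1) :
    IntegrableOn (fun s => besselK n s * s ^ b) (Ioi 0) := by
  simp_rw [besselK_mul_rpow_eq_integral]
  exact (integrable_uncurry_besselKernel n hnb).swap.integral_prod_left

lemma integral_besselK_mul_rpow (n : ℕ) {b : ℝ} (hnb : (n : ℝ) < b + 1) :
    ∫ s in Ioi 0, besselK n s * s ^ b = Gamma (b + 1) * coshMoment n (b + 1) := by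
  have hb : -1 < b := by linarith [(Nat.cast_nonneg n : (0 : ℝ) ≤ n)]
  simp_rw [besselK_mul_rpow_eq_integral]
  rw [← integral_integral_swap (integrable_uncurry_besselKernel n hnb)]
  simp_rw [integral_besselKernel n hb]
  rw [integral_const_mul, coshMoment]

lemma hasDerivAt_two_mul_sinh_mul_cosh_rpow (a x : ℝ) :
    HasDerivAt (fun t => 2 * sinh t * cosh t ^ (1 - a))
      ((a + 2) * (cosh (2 * x) * cosh x ^ (-a)) - a * (cosh (3 * x) * cosh x ^ (-(a + 1)))) x := by
  have hc := cosh_pos x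
  refine (((hasDerivAt_sinh x).const_mul 2).mul
    ((hasDerivAt_cosh x).rpow_const (Or.inl hc.ne'))).congr_deriv ?_
  have e1 : cosh x ^ (1 - a) = cosh x * cosh x ^ (-a) := by
    rw [sub_eq_add_neg, rpow_add hc, rpow_one]
  have e2 : cosh x ^ (-(a + 1)) * cosh x = cosh x ^ (-a) := by
    rw [← rpow_add_one hc.ne']; ring_nf
  rw [e1, sub_sub_cancel_left, cosh_two_mul, cosh_three_mul, ← e2]
  linear_combination (-3 * a * cosh x ^ (-(a + 1)) * cosh x) * sinh_sq x

lemma tendsto_cosh_atTop : Tendsto cosh atTop atTop :=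
  tendsto_atTop_mono (fun t => by linarith [exp_le_two_mul_cosh t])
    (tendsto_exp_atTop.atTop_div_const two_pos)

lemma tendsto_two_mul_sinh_mul_cosh_rpow {a : ℝ} (ha : 2 < a) :
    Tendsto (fun t => 2 * sinh t * cosh t ^ (1 - a)) atTop (𝓝 0) := by
  have hlim : Tendsto (fun t => 2 * cosh t ^ (-(a - 2))) atTop (𝓝 0) := by
    simpa using ((tendsto_rpow_neg_atTop (sub_pos.2 ha)).comp tendsto_cosh_atTop).const_mul 2
  refine squeeze_zero_norm (fun t => ?_) hlim
  have hc := cosh_pos t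
  calc ‖2 * sinh t * cosh t ^ (1 - a)‖ = 2 * |sinh t| * cosh t ^ (1 - a) := by
        rw [norm_mul, norm_mul, norm_of_nonneg (rpow_pos_of_pos hc _).le]; norm_num
    _ ≤ 2 * cosh t * cosh t ^ (1 - a) := by
        gcongr
        rw [abs_sinh, ← cosh_abs]
        exact (sinh_lt_cosh _).le
    _ = 2 * cosh t ^ (-(a - 2)) := by
        rw [mul_assoc, ← rpow_one_add' hc.le (by linarith)]; ring_nf

lemma coshMoment_three_add_one {a : ℝ} (ha : 2 < a) :
    a * coshMoment 3 (a + 1) = (a + 2) * coshMoment 2 a := by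
  have h3 := integrableOn_cosh_mul_mul_cosh_rpow_neg (n := 3) (b := a + 1)
    (by rw [abs_of_pos three_pos]; linarith)
  have h2 := integrableOn_cosh_mul_mul_cosh_rpow_neg (n := 2) (b := a)
    (by rw [abs_of_pos two_pos]; linarith)
  have hzero := integral_Ioi_of_hasDerivAt_of_tendsto'
    (fun x _ => hasDerivAt_two_mul_sinh_mul_cosh_rpow a x)
    ((h2.const_mul (a + 2)).sub (h3.const_mul a)) (tendsto_two_mul_sinh_mul_cosh_rpow ha)
  rw [integral_sub (h2.const_mul _) (h3.const_mul _), integral_const_mul, integral_const_mul]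
    at hzero
  simp only [sinh_zero, mul_zero, zero_mul, sub_zero] at hzero
  rw [coshMoment, coshMoment]
  linarith

lemma coshMoment_pos {n b : ℝ} (hnb : |n| < b) : 0 < coshMoment n b := by
  have hpos : ∀ t, 0 < cosh (n * t) * cosh t ^ (-b) := fun t =>
    mul_pos (cosh_pos _) (rpow_pos_of_pos (cosh_pos t) _)
  refine (integral_pos_iff_support_of_nonneg (fun t => (hpos t).le)
    (integrableOn_cosh_mul_mul_cosh_rpow_neg hnb)).2 ?_
  simp [Function.support_eq_univ fun t => (hpos t).ne']

/-- For `a > 2`, the limiting (γ = 0) integrals are finite and their ratio is `a + 1`. -/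
theorem limiting_ratio_eq_a_add_one (a : ℝ) (ha : 2 < a) :
    MeasureTheory.IntegrableOn
      (fun s : ℝ => (besselK 3 s - besselK 2 s / s) * s ^ a) (Set.Ioi 0) ∧
    MeasureTheory.IntegrableOn (fun s : ℝ => (besselK 2 s / s) * s ^ a) (Set.Ioi 0) ∧
    (∫ s in Set.Ioi (0 : ℝ), (besselK 3 s - besselK 2 s / s) * s ^ a) /
      (∫ s in Set.Ioi (0 : ℝ), (besselK 2 s / s) * s ^ a) = a + 1 := by
  have hK3 : ((3 : ℕ) : ℝ) < a + 1 := by push_cast; linarith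
  have hK2 : ((2 : ℕ) : ℝ) < a - 1 + 1 := by push_cast; linarith
  have hdiv : EqOn (fun s => besselK 2 s * s ^ (a - 1)) (fun s => besselK 2 s / s * s ^ a)
      (Ioi 0) := fun s (hs : 0 < s) => by
    dsimp only; rw [rpow_sub_one hs.ne']; field_simp
  have hdiff : EqOn (fun s => besselK 3 s * s ^ a - besselK 2 s * s ^ (a - 1))
      (fun s => (besselK 3 s - besselK 2 s / s) * s ^ a) (Ioi 0) := fun s hs => by
    simp only [hdiv hs]; ring
  have hI3 := integrableOn_besselK_mul_rpow 3 hK3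
  have hI2 := integrableOn_besselK_mul_rpow 2 hK2
  refine ⟨(hI3.sub hI2).congr_fun hdiff measurableSet_Ioi,
    hI2.congr_fun hdiv measurableSet_Ioi, ?_⟩
  rw [← setIntegral_congr_fun measurableSet_Ioi hdiff,
    ← setIntegral_congr_fun measurableSet_Ioi hdiv, integral_sub hI3 hI2,
    integral_besselK_mul_rpow 3 hK3, integral_besselK_mul_rpow 2 hK2,
    sub_add_cancel, Gamma_add_one (by linarith)]
  have hM := coshMoment_pos (n := 2) (b := a) (by rw [abs_of_pos two_pos]; linarith)
  have hG := Gamma_pos_of_pos (by linarith : 0 < a)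
  push_cast
  field_simp
  linear_combination coshMoment_three_add_one ha
end

section
/- For λ = 0, the solution space of the characteristic (wave) system, i.e. the subspace S₀ = {(δn, δT, δU) ∈ ℝ × ℝ × ℝ⁴ : η(U, δU) = 0, equations (E1) and (E2) hold with λ = 0}, is a linear subspace of ℝ⁶ of dimension 3; equivalently, with λ = 0 the system reduces to η(ν, δU) = 0 and T δn + n δT = 0. -/
open MeasureTheory Real Filter Set

/-- The Minkowski bilinear form on `ℝ⁴`. -/
def eta (x y : Fin 4 → ℝ) : ℝ :=
  x 0 * y 0 - x 1 * y 1 - x 2 * y 2 - x 3 * y 3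

/-- The characteristic (wave) system of the relativistic Euler equations with
energy `e = r·p`, for the characteristic speed `lam` (in light speed units), in the
unknowns `v = (δn, δT, δU)`, including the linearized constraint `η(U, δU) = 0`. -/
def WaveSol (c n T r lam : ℝ) (U ν : Fin 4 → ℝ) (v : ℝ × ℝ × (Fin 4 → ℝ)) : Prop :=
  eta U v.2.2 = 0 ∧
  -- (E1)
  (-(lam * c) * v.1 + n * eta ν v.2.2 = 0) ∧
  -- (E2)
  (∀ β : Fin 4,
    -(ν β) * (T * v.1 + n * v.2.1) + n * T * ((r + 1) / c ^ 2) * U β * eta ν v.2.2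
      - (lam / c) * (r * U β * (T * v.1 + n * v.2.1) + n * T * (r + 1) * v.2.2 β) = 0)

/-! For `λ = 0` the solution space is the kernel of `v ↦ (η(U, δU), η(ν, δU), T δn + n δT)`.
This map is onto `ℝ³` because `U` and `ν` are orthogonal and non-null, so rank–nullity gives
dimension `6 - 3 = 3`. -/

namespace Minkowski

lemma eta_zero_left (y : Fin 4 → ℝ) : eta 0 y = 0 := by
  simp [eta]

lemma eta_comm (x y : Fin 4 → ℝ) : eta x y = eta y x := by
  simp only [eta]; ring

lemma ne_zero_of_eta_self_ne_zero {x : Fin 4 → ℝ} (hx : eta x x ≠ 0) : x ≠ 0 := by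
  rintro rfl
  exact hx (eta_zero_left 0)

def etaLin (x : Fin 4 → ℝ) : (Fin 4 → ℝ) →ₗ[ℝ] ℝ where
  toFun := eta x
  map_add' y z := by simp only [eta, Pi.add_apply]; ring
  map_smul' a y := by simp only [eta, Pi.smul_apply, smul_eq_mul, RingHom.id_apply]; ring

@[simp]
lemma etaLin_apply (x y : Fin 4 → ℝ) : etaLin x y = eta x y := rfl

end Minkowski

open Minkowski

/-- For `λ = 0`, (E1) forces `η(ν, δU) = 0`, after which (E2) reads `(T δn + n δT) ν = 0`. -/
theorem waveSol_zero_iff {c n T r : ℝ} (hn : n ≠ 0) {U ν : Fin 4 → ℝ} (hν : ν ≠ 0)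
    (v : ℝ × ℝ × (Fin 4 → ℝ)) :
    WaveSol c n T r 0 U ν v ↔
      eta U v.2.2 = 0 ∧ eta ν v.2.2 = 0 ∧ T * v.1 + n * v.2.1 = 0 := by
  simp only [WaveSol, zero_mul, neg_zero, zero_div, zero_add, sub_zero, mul_eq_zero,
    hn, false_or]
  refine and_congr_right fun _ => and_congr_right fun hνδU => ?_
  simp only [hνδU, mul_zero, add_zero, neg_mul, neg_eq_zero]
  have h : (∀ β, ν β * (T * v.1 + n * v.2.1) = 0) ↔ (T * v.1 + n * v.2.1) • ν = 0 := by
    simp only [funext_iff, Pi.smul_apply, smul_eq_mul, Pi.zero_apply, mul_comm]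
  rw [h, smul_eq_zero, or_iff_left hν]

def waveMapZero (n T : ℝ) (U ν : Fin 4 → ℝ) : ℝ × ℝ × (Fin 4 → ℝ) →ₗ[ℝ] ℝ × ℝ × ℝ :=
  (etaLin U ∘ₗ LinearMap.snd ℝ ℝ _ ∘ₗ LinearMap.snd ℝ ℝ _).prod
    ((etaLin ν ∘ₗ LinearMap.snd ℝ ℝ _ ∘ₗ LinearMap.snd ℝ ℝ _).prod
      (T • LinearMap.fst ℝ ℝ _ + n • (LinearMap.fst ℝ ℝ _ ∘ₗ LinearMap.snd ℝ ℝ _)))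

lemma waveMapZero_apply (n T : ℝ) (U ν : Fin 4 → ℝ) (v : ℝ × ℝ × (Fin 4 → ℝ)) :
    waveMapZero n T U ν v = (eta U v.2.2, eta ν v.2.2, T * v.1 + n * v.2.1) := rfl

/-- A preimage of `(a, b, d)` is `(0, d / n, (a / η(U,U)) U + (b / η(ν,ν)) ν)`. -/
lemma waveMapZero_surjective {n T : ℝ} (hn : n ≠ 0) {U ν : Fin 4 → ℝ} (hU : eta U U ≠ 0)
    (hν : eta ν ν ≠ 0) (hUν : eta U ν = 0) : Function.Surjective (waveMapZero n T U ν) := by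
  rintro ⟨a, b, d⟩
  refine ⟨(0, d / n, (a / eta U U) • U + (b / eta ν ν) • ν), ?_⟩
  have hνU : eta ν U = 0 := by rw [eta_comm, hUν]
  simp only [waveMapZero_apply, ← etaLin_apply, map_add, map_smul, smul_eq_mul]
  simp only [etaLin_apply, hUν, hνU, mul_zero, add_zero, zero_add, div_mul_cancel₀ _ hU,
    div_mul_cancel₀ _ hν, mul_div_cancel₀ _ hn]

lemma finrank_ker_waveMapZero {n T : ℝ} (hn : n ≠ 0) {U ν : Fin 4 → ℝ} (hU : eta U U ≠ 0)
    (hν : eta ν ν ≠ 0) (hUν : eta U ν = 0) :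
    Module.finrank ℝ (LinearMap.ker (waveMapZero n T U ν)) = 3 := by
  have h := LinearMap.finrank_range_add_finrank_ker (waveMapZero n T U ν)
  rw [LinearMap.range_eq_top.mpr (waveMapZero_surjective hn hU hν hUν), finrank_top] at h
  simp only [Module.finrank_prod, Module.finrank_self, Module.finrank_fin_fun] at h
  omega

theorem wave_system_lambda_zero_general (c n T r : ℝ) (hc : 0 < c) (hn : 0 < n)
    (U ν : Fin 4 → ℝ) (hU : eta U U = c ^ 2) (hν : eta ν ν = -1)
    (hUν : eta U ν = 0) :
    (∀ v : ℝ × ℝ × (Fin 4 → ℝ),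
      WaveSol c n T r 0 U ν v ↔
        (eta U v.2.2 = 0 ∧ eta ν v.2.2 = 0 ∧ T * v.1 + n * v.2.1 = 0)) ∧
    ∃ S₀ : Submodule ℝ (ℝ × ℝ × (Fin 4 → ℝ)),
      (S₀ : Set (ℝ × ℝ × (Fin 4 → ℝ))) = {v | WaveSol c n T r 0 U ν v} ∧
      Module.finrank ℝ S₀ = 3 := by
  have hUU : eta U U ≠ 0 := by rw [hU]; positivity
  have hνν : eta ν ν ≠ 0 := by rw [hν]; norm_num
  have hiff := waveSol_zero_iff (c := c) (T := T) (r := r) (U := U) hn.ne'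
    (ne_zero_of_eta_self_ne_zero hνν)
  refine ⟨hiff, LinearMap.ker (waveMapZero n T U ν), ?_,
    finrank_ker_waveMapZero hn.ne' hUU hνν hUν⟩
  ext v
  simp only [SetLike.mem_coe, LinearMap.mem_ker, waveMapZero_apply, Prod.mk_eq_zero,
    Set.mem_ofPred_eq, hiff]

/-- For `λ = 0` the solution space of the characteristic system is a linear subspace
of dimension `3`; equivalently the system reduces to `η(ν, δU) = 0` and
`T δn + n δT = 0` (together with the constraint `η(U, δU) = 0`). -/
theorem wave_system_lambda_zero (c n T r : ℝ) (hc : 0 < c) (hn : 0 < n) (hT : 0 < T)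
    (hr : 0 < r) (U ν : Fin 4 → ℝ) (hU : eta U U = c ^ 2) (hν : eta ν ν = -1)
    (hUν : eta U ν = 0) :
    (∀ v : ℝ × ℝ × (Fin 4 → ℝ),
      WaveSol c n T r 0 U ν v ↔
        (eta U v.2.2 = 0 ∧ eta ν v.2.2 = 0 ∧ T * v.1 + n * v.2.1 = 0)) ∧
    ∃ S₀ : Submodule ℝ (ℝ × ℝ × (Fin 4 → ℝ)),
      (S₀ : Set (ℝ × ℝ × (Fin 4 → ℝ))) = {v | WaveSol c n T r 0 U ν v} ∧
      Module.finrank ℝ S₀ = 3 :=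
  wave_system_lambda_zero_general c n T r hc hn U ν hU hν hUν
end

section
/- For λ = 1/√r and for λ = −1/√r, the solution space of the characteristic (wave) system, S_λ = {(δn, δT, δU) ∈ ℝ × ℝ × ℝ⁴ : η(U, δU) = 0, equations (E1) and (E2) hold}, is a linear subspace of ℝ⁶ of dimension exactly 1; its elements satisfy δn/n = r · δT/T and δU = (−c/(λ n r)) δn · ν. -/
open MeasureTheory Real Filter Set

/-!
Contracting (E2) with `U` kills its `ν` and `δU` terms (`η(U, ν) = η(U, δU) = 0`) and gives
`n T (r+1) η(ν, δU) = λ c r (T δn + n δT)`; together with (E1) this forces `T δn = r n δT`, and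
then (E2) read componentwise forces `δU` to be the multiple `-c δn / (λ n r)` of `ν`. So every
solution is a multiple of `(λ n r, λ T, -c ν)`, and this vector solves the system precisely
because `λ² r = 1`.
-/

theorem eta_smul_right (x y : Fin 4 → ℝ) (a : ℝ) : eta x (a • y) = a * eta x y := by
  simp only [eta, Pi.smul_apply, smul_eq_mul]
  ring

theorem eta_linear_combination_eq_zero (w : Fin 4 → ℝ) {x y z : Fin 4 → ℝ} {a b d : ℝ}
    (h : ∀ β, a * x β + b * y β + d * z β = 0) :
    a * eta w x + b * eta w y + d * eta w z = 0 := by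
  simp only [eta]
  linear_combination w 0 * h 0 - w 1 * h 1 - w 2 * h 2 - w 3 * h 3

theorem sq_mul_eq_one_of_eq_inv_sqrt {r lam : ℝ} (hr : 0 < r)
    (hlam : lam = 1 / Real.sqrt r ∨ lam = -(1 / Real.sqrt r)) : lam ^ 2 * r = 1 := by
  rcases hlam with rfl | rfl <;> simp [Real.sq_sqrt hr.le, hr.ne']

def soundMode (c n T r lam : ℝ) (ν : Fin 4 → ℝ) : ℝ × ℝ × (Fin 4 → ℝ) :=
  (lam * n * r, lam * T, (-c) • ν)

section WaveSol

variable {c n T r lam : ℝ} {U ν : Fin 4 → ℝ} {v : ℝ × ℝ × (Fin 4 → ℝ)}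

theorem WaveSol.smul (hv : WaveSol c n T r lam U ν v) (t : ℝ) :
    WaveSol c n T r lam U ν (t • v) := by
  obtain ⟨h0, h1, h2⟩ := hv
  refine ⟨?_, ?_, fun β => ?_⟩ <;>
    simp only [Prod.smul_fst, Prod.smul_snd, Pi.smul_apply, smul_eq_mul, eta_smul_right]
  · rw [h0, mul_zero]
  · linear_combination t * h1
  · linear_combination t * h2 β

theorem WaveSol.mul_eta_eq (hc : c ≠ 0) (hU : eta U U = c ^ 2) (hUν : eta U ν = 0)
    (hv : WaveSol c n T r lam U ν v) :
    n * T * (r + 1) * eta ν v.2.2 = lam * c * r * (T * v.1 + n * v.2.1) := by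
  obtain ⟨h0, -, h2⟩ := hv
  have h := eta_linear_combination_eq_zero U (x := ν) (y := U) (z := v.2.2)
    (a := -(T * v.1 + n * v.2.1))
    (b := n * T * ((r + 1) / c ^ 2) * eta ν v.2.2 - lam / c * r * (T * v.1 + n * v.2.1))
    (d := -(lam / c) * n * T * (r + 1)) fun β => by linear_combination h2 β
  rw [hUν, hU, h0] at h
  have hcE : c * (n * T * (r + 1) * eta ν v.2.2 - lam * c * r * (T * v.1 + n * v.2.1)) = 0 := by
    field_simp at h
    linear_combination h
  linear_combination (mul_eq_zero.mp hcE).resolve_left hc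

theorem WaveSol.temperature_relation (hc : c ≠ 0) (hlam : lam ≠ 0) (hU : eta U U = c ^ 2)
    (hUν : eta U ν = 0) (hv : WaveSol c n T r lam U ν v) : T * v.1 = r * n * v.2.1 := by
  have hE := hv.mul_eta_eq hc hU hUν
  have hE1 := hv.2.1
  refine mul_left_cancel₀ (mul_ne_zero hlam hc) ?_
  linear_combination hE - T * (r + 1) * hE1

theorem WaveSol.velocity_eq (hc : c ≠ 0) (hn : n ≠ 0) (hT : T ≠ 0) (hr : 0 < r)
    (hlam : lam ≠ 0) (hU : eta U U = c ^ 2) (hUν : eta U ν = 0)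
    (hv : WaveSol c n T r lam U ν v) : v.2.2 = (-c / (lam * n * r) * v.1) • ν := by
  have hE := hv.mul_eta_eq hc hU hUν
  have hTa := hv.temperature_relation hc hlam hU hUν
  funext β
  have h2 := hv.2.2 β
  field_simp at h2
  have hβ : c * T * (r + 1) * (lam * n * r * v.2.2 β + c * v.1 * ν β) = 0 := by
    linear_combination (-r) * h2 + (r * U β) * hE + (c ^ 2 * ν β) * hTa
  have hcT : c * T * (r + 1) ≠ 0 := by positivity
  simp only [Pi.smul_apply, smul_eq_mul]
  field_simp
  linear_combination (mul_eq_zero.mp hβ).resolve_left hcT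

theorem waveSol_soundMode (hc : c ≠ 0) (hν : eta ν ν = -1) (hUν : eta U ν = 0)
    (hlr : lam ^ 2 * r = 1) : WaveSol c n T r lam U ν (soundMode c n T r lam ν) := by
  refine ⟨?_, ?_, fun β => ?_⟩ <;>
    simp only [soundMode, eta_smul_right, hUν, hν, Pi.smul_apply, smul_eq_mul]
  · ring
  · linear_combination (-n * c) * hlr
  · field_simp
    linear_combination (-T * n * (r + 1) * U β) * hlr

theorem waveSol_iff_exists_smul_soundMode (hc : c ≠ 0) (hn : n ≠ 0) (hT : T ≠ 0) (hr : 0 < r)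
    (hU : eta U U = c ^ 2) (hν : eta ν ν = -1) (hUν : eta U ν = 0) (hlr : lam ^ 2 * r = 1) :
    WaveSol c n T r lam U ν v ↔ ∃ t : ℝ, t • soundMode c n T r lam ν = v := by
  have hlam : lam ≠ 0 := by rintro rfl; simp at hlr
  constructor
  · intro hv
    have hTa := hv.temperature_relation hc hlam hU hUν
    refine ⟨v.1 / (lam * n * r), Prod.ext ?_ (Prod.ext ?_ ?_)⟩
    · simp only [soundMode, Prod.smul_fst, smul_eq_mul]
      field_simp
    · simp only [soundMode, Prod.smul_fst, Prod.smul_snd, smul_eq_mul]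
      field_simp
      linear_combination hTa
    · rw [hv.velocity_eq hc hn hT hr hlam hU hUν]
      simp only [soundMode, Prod.smul_snd, smul_smul]
      congr 1
      field_simp
  · rintro ⟨t, rfl⟩
    exact (waveSol_soundMode hc hν hUν hlr).smul t

end WaveSol

/-- For `λ = ±1/√r` the solution space of the characteristic system is a linear
subspace of dimension exactly `1`, and its elements satisfy `δn/n = r δT/T` and
`δU = (-c/(λ n r)) δn · ν`. -/
theorem wave_system_sound_speeds (c n T r : ℝ) (hc : 0 < c) (hn : 0 < n) (hT : 0 < T)
    (hr : 0 < r) (U ν : Fin 4 → ℝ) (hU : eta U U = c ^ 2) (hν : eta ν ν = -1)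
    (hUν : eta U ν = 0) (lam : ℝ)
    (hlam : lam = 1 / Real.sqrt r ∨ lam = -(1 / Real.sqrt r)) :
    (∃ S : Submodule ℝ (ℝ × ℝ × (Fin 4 → ℝ)),
      (S : Set (ℝ × ℝ × (Fin 4 → ℝ))) = {v | WaveSol c n T r lam U ν v} ∧
      Module.finrank ℝ S = 1) ∧
    ∀ v : ℝ × ℝ × (Fin 4 → ℝ), WaveSol c n T r lam U ν v →
      v.1 / n = r * (v.2.1 / T) ∧ v.2.2 = (-c / (lam * n * r) * v.1) • ν := by
  have hlr := sq_mul_eq_one_of_eq_inv_sqrt hr hlam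
  have hlam0 : lam ≠ 0 := by rintro rfl; simp at hlr
  have hmode : soundMode c n T r lam ν ≠ 0 := fun h => by
    simpa [soundMode, hlam0, hn.ne', hr.ne'] using congrArg Prod.fst h
  refine ⟨⟨Submodule.span ℝ {soundMode c n T r lam ν}, ?_, finrank_span_singleton hmode⟩,
    fun v hv => ⟨?_, hv.velocity_eq hc.ne' hn.ne' hT.ne' hr hlam0 hU hUν⟩⟩
  · ext v
    rw [SetLike.mem_coe, Submodule.mem_span_singleton, Set.mem_ofPred_eq,
      waveSol_iff_exists_smul_soundMode hc.ne' hn.ne' hT.ne' hr hU hν hUν hlr]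
  · have hTa := hv.temperature_relation hc.ne' hlam0 hU hUν
    field_simp
    linear_combination hTa
end

section
/- For every λ ∈ ℝ with λ ≠ 0, λ ≠ 1/√r and λ ≠ −1/√r, the characteristic (wave) system admits only the trivial solution: if (δn, δT, δU) ∈ ℝ × ℝ × ℝ⁴ satisfies η(U, δU) = 0 together with equations (E1) and (E2), then δn = 0, δT = 0 and δU = 0. -/
open MeasureTheory Real Filter Set

set_option maxHeartbeats 1000000 in
/-- For `λ ∉ {0, 1/√r, -1/√r}` the characteristic system admits only the trivial
solution. -/
theorem wave_system_trivial_solution (c n T r : ℝ) (hc : 0 < c) (hn : 0 < n) (hT : 0 < T)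
    (hr : 0 < r) (U ν : Fin 4 → ℝ) (hU : eta U U = c ^ 2) (hν : eta ν ν = -1)
    (hUν : eta U ν = 0) (lam : ℝ) (h0 : lam ≠ 0) (hp : lam ≠ 1 / Real.sqrt r)
    (hm : lam ≠ -(1 / Real.sqrt r)) :
    ∀ v : ℝ × ℝ × (Fin 4 → ℝ), WaveSol c n T r lam U ν v →
      v.1 = 0 ∧ v.2.1 = 0 ∧ v.2.2 = 0 := by
  have hcne : c ≠ 0 := ne_of_gt hc
  have hnne : n ≠ 0 := ne_of_gt hn
  have hTne : T ≠ 0 := ne_of_gt hT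
  have hlr : lam ^ 2 * r ≠ 1 := by
    intro h
    have hs : Real.sqrt r > 0 := Real.sqrt_pos.mpr hr
    have hb : (lam - 1 / Real.sqrt r) * (lam + 1 / Real.sqrt r) = 0 := by
      have h2 : (1 / Real.sqrt r) ^ 2 = 1 / r := by
        rw [div_pow, one_pow, Real.sq_sqrt hr.le]
      have h3 : lam ^ 2 = (1 / Real.sqrt r) ^ 2 := by
        rw [h2]; field_simp; linarith [h]
      nlinarith [h3]
    rcases mul_eq_zero.mp hb with h' | h'
    · exact hp (by linarith)
    · exact hm (by linarith)
  rintro ⟨dn, dT, dU⟩ ⟨hC, hE1, hE2⟩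
  simp only [eta] at hC hE1 hU hν hUν
  have e0 := hE2 0
  have e1 := hE2 1
  have e2 := hE2 2
  have e3 := hE2 3
  simp only [eta] at e0 e1 e2 e3
  dsimp only at *
  set s : ℝ := ν 0 * dU 0 - ν 1 * dU 1 - ν 2 * dU 2 - ν 3 * dU 3 with hsdef
  set A : ℝ := T * dn + n * dT with hAdef
  -- U contraction
  have eqU : n * T * (r + 1) * s - lam * c * r * A = 0 := by
    linear_combination (norm := (field_simp; ring1))
      U 0 * e0 - U 1 * e1 - U 2 * e2 - U 3 * e3
      - (n * T * ((r + 1) / c ^ 2) * s - (lam / c) * r * A) * hU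
      + A * hUν + ((lam / c) * n * T * (r + 1)) * hC
  -- ν contraction
  have eqν : c * A - lam * n * T * (r + 1) * s = 0 := by
    linear_combination (norm := (field_simp; ring1))
      c * (ν 0 * e0 - ν 1 * e1 - ν 2 * e2 - ν 3 * e3)
      + c * A * hν
      - (n * T * ((r + 1) / c ^ 2) * s - (lam / c) * r * A) * c * hUν
  have h1 : T * (r + 1) * dn - r * A = 0 := by
    have key : lam * c * (T * (r + 1) * dn - r * A) = 0 := by
      linear_combination eqU - T * (r + 1) * hE1
    have hlc : lam * c ≠ 0 := mul_ne_zero h0 hcne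
    exact (mul_eq_zero.mp key).resolve_left hlc
  have h2 : A - lam ^ 2 * T * (r + 1) * dn = 0 := by
    have key : c * (A - lam ^ 2 * T * (r + 1) * dn) = 0 := by
      linear_combination eqν + lam * T * (r + 1) * hE1
    exact (mul_eq_zero.mp key).resolve_left hcne
  have hdn : dn = 0 := by
    have key : (1 - lam ^ 2 * r) * (T * (r + 1)) * dn = 0 := by
      linear_combination h1 + r * h2
    have h1r : (1 - lam ^ 2 * r) ≠ 0 := fun h => hlr (by linarith)
    have h2r : T * (r + 1) ≠ 0 := by positivity
    have := mul_eq_zero.mp key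
    rcases this with h | h
    · exact absurd (mul_eq_zero.mp h) (by tauto)
    · exact h
  have hA0 : A = 0 := by
    linear_combination h2 + lam ^ 2 * T * (r + 1) * hdn
  have hdT : dT = 0 := by
    have hnT : n * dT = 0 := by linear_combination hA0 - hAdef - T * hdn
    exact (mul_eq_zero.mp hnT).resolve_left hnne
  have hs0 : s = 0 := by
    have hns : n * s = 0 := by linear_combination hE1 + lam * c * hdn
    exact (mul_eq_zero.mp hns).resolve_left hnne
  refine ⟨hdn, hdT, ?_⟩
  funext β
  have eβ := hE2 β
  simp only [eta] at eβ
  have hs0' : ν 0 * dU 0 - ν 1 * dU 1 - ν 2 * dU 2 - ν 3 * dU 3 = 0 := hsdef.symm.trans hs0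
  have key : (lam / c) * (n * T * (r + 1)) * dU β = 0 := by
    linear_combination -eβ + n * T * ((r + 1) / c ^ 2) * U β * hs0'
      - (ν β + (lam / c) * r * U β) * hA0
  have hlc : (lam / c) * (n * T * (r + 1)) ≠ 0 := by
    apply mul_ne_zero (div_ne_zero h0 hcne)
    positivity
  simpa using (mul_eq_zero.mp key).resolve_left hlc
end
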